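/- Assume (Af), assume that for every μ ∈ 𝒫₂(H) the map (x,q) ↦ f(x,μ,q) is Borel measurable on H × Λ̃, and assume the one-sided estimate: there is C ≥ 0 with ⟨f(x,μ,q) − f(y,β,q), B(x−y)⟩ ≤ C(|x−y|²_{−1} + d_{−1,r}(μ,β)²) for all x,y ∈ H, μ,β ∈ 𝒫₂(H), q ∈ Λ̃. Then there is a constant C' ≥ 0 such that for all Borel measurable X, Y : (0,1) → H with ∫_0^1 |X(ω)|² dω < ∞ and ∫_0^1 |Y(ω)|² dω < ∞, and every Borel measurable Q : (0,1) → Λ with Q(ω) ∈ Λ̃ for a.e. ω and ∫_0^1 |Q(ω)|²_Λ dω < ∞, one has ∫_0^1 ⟨f(X(ω), X_#𝓛¹, Q(ω)) − f(Y(ω), Y_#𝓛¹, Q(ω)), B(X(ω) − Y(ω))⟩ dω ≤ C' ∫_0^1 |X(ω) − Y(ω)|²_{−1} dω. -/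

import Mathlib

open MeasureTheory
open scoped RealInnerProductSpace ENNReal

section

variable {H : Type*} [NormedAddCommGroup H] [InnerProductSpace ℝ H] [CompleteSpace H]
  [SecondCountableTopology H] [MeasurableSpace H] [BorelSpace H]
variable {Λ : Type*} [NormedAddCommGroup Λ] [InnerProductSpace ℝ Λ] [CompleteSpace Λ]
  [SecondCountableTopology Λ] [MeasurableSpace Λ] [BorelSpace Λ]

/-- `μ` is a Borel probability measure on `H` with finite second moment. -/
def IsP2 (μ : Measure H) : Prop :=
  IsProbabilityMeasure μ ∧ (∫⁻ x, (‖x‖₊ : ℝ≥0∞) ^ 2 ∂μ) < ⊤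

/-- The `r`-Wasserstein distance `d_r` on probability measures on `H`. -/
noncomputable def dr (r : ℝ) (μ β : Measure H) : ℝ :=
  sInf { c : ℝ | ∃ γ : Measure (H × H), IsProbabilityMeasure γ ∧
      γ.map Prod.fst = μ ∧ γ.map Prod.snd = β ∧
      c = (∫ p, ‖p.1 - p.2‖ ^ r ∂γ) ^ (1 / r) }

/-- The weak norm `|x|_{-1} = ⟨Bx, x⟩^{1/2}`. -/
noncomputable def nrmB (B : H →L[ℝ] H) (x : H) : ℝ := Real.sqrt ⟪B x, x⟫

/-- The `r`-Wasserstein distance `d_{-1,r}` with respect to the weak norm `|·|_{-1}`. -/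
noncomputable def drB (B : H →L[ℝ] H) (r : ℝ) (μ β : Measure H) : ℝ :=
  sInf { c : ℝ | ∃ γ : Measure (H × H), IsProbabilityMeasure γ ∧
      γ.map Prod.fst = μ ∧ γ.map Prod.snd = β ∧
      c = (∫ p, nrmB B (p.1 - p.2) ^ r ∂γ) ^ (1 / r) }

/-- The Hamiltonian `𝓗(x,μ,p) = inf_{q ∈ Λ̃} (⟨f(x,μ,q), p⟩ + l(x,μ,q))`. -/
noncomputable def Ham (f : H → Measure H → Λ → H) (l : H → Measure H → Λ → ℝ)
    (Λt : Set Λ) (x : H) (μ : Measure H) (p : H) : ℝ :=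
  sInf ((fun q => ⟪f x μ q, p⟫ + l x μ q) '' Λt)

/-!
Couple `X_#𝓛¹` and `Y_#𝓛¹` through `(X, Y)_#𝓛¹`. This coupling gives
`d_{-1,r}(X_#𝓛¹, Y_#𝓛¹) ≤ ‖|X - Y|_{-1}‖_{L^r}`, and since `r ≤ 2` Jensen's inequality for the
concave map `t ↦ t^{r/2}` bounds this by `‖|X - Y|_{-1}‖_{L²}`. Integrating the pointwise
one-sided estimate then gives the claim with `C' = 2C`.
-/

section

variable {E : Type*} [NormedAddCommGroup E] [InnerProductSpace ℝ E]
  {Ω : Type*} [MeasurableSpace Ω]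

theorem continuous_nrmB (B : E →L[ℝ] E) : Continuous (nrmB B) :=
  Real.continuous_sqrt.comp (B.continuous.inner continuous_id)

theorem nrmB_nonneg (B : E →L[ℝ] E) (x : E) : 0 ≤ nrmB B x := Real.sqrt_nonneg _

theorem nrmB_le (B : E →L[ℝ] E) (x : E) : nrmB B x ≤ √‖B‖ * ‖x‖ := by
  calc nrmB B x ≤ √(‖B‖ * ‖x‖ ^ 2) := by
        refine Real.sqrt_le_sqrt ((real_inner_le_norm _ _).trans ?_)
        rw [sq, ← mul_assoc]
        exact mul_le_mul_of_nonneg_right (B.le_opNorm x) (norm_nonneg x)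
    _ = √‖B‖ * ‖x‖ := by rw [Real.sqrt_mul (norm_nonneg B), Real.sqrt_sq (norm_nonneg x)]

theorem memLp_two_of_lintegral_sq_lt_top {V : Type*} [NormedAddCommGroup V]
    {P : Measure Ω} {X : Ω → V} (hX : AEStronglyMeasurable X P)
    (h : ∫⁻ ω, (‖X ω‖₊ : ℝ≥0∞) ^ 2 ∂P < ⊤) :
    MemLp X 2 P :=
  ⟨hX, (eLpNorm_lt_top_iff_lintegral_rpow_enorm_lt_top two_ne_zero ENNReal.ofNat_ne_top).2
    (by simpa [enorm_eq_nnnorm] using h)⟩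

theorem memLp_nrmB_sub (B : E →L[ℝ] E) {P : Measure Ω} {p : ℝ≥0∞} {X Y : Ω → E}
    (hX : MemLp X p P) (hY : MemLp Y p P) :
    MemLp (fun ω => nrmB B (X ω - Y ω)) p P :=
  (hX.sub hY).norm.const_mul √‖B‖ |>.of_le
    ((continuous_nrmB B).comp_aestronglyMeasurable (hX.1.sub hY.1))
    (ae_of_all _ fun ω => by
      simpa [Real.norm_of_nonneg (nrmB_nonneg B _), abs_of_nonneg (Real.sqrt_nonneg _)]
        using nrmB_le B (X ω - Y ω))

theorem isP2_map {V : Type*} [NormedAddCommGroup V] [MeasurableSpace V]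
    [OpensMeasurableSpace V] {P : Measure Ω} [IsProbabilityMeasure P] {X : Ω → V}
    (hX : Measurable X) (h : ∫⁻ ω, (‖X ω‖₊ : ℝ≥0∞) ^ 2 ∂P < ⊤) :
    IsP2 (P.map X) :=
  ⟨Measure.isProbabilityMeasure_map hX.aemeasurable, by
    rwa [lintegral_map (measurable_nnnorm.coe_nnreal_ennreal.pow_const 2) hX]⟩

theorem drB_nonneg [MeasurableSpace E] (B : E →L[ℝ] E) (r : ℝ) (μ β : Measure E) :
    0 ≤ drB B r μ β :=
  Real.sInf_nonneg <| by
    rintro c ⟨γ, -, -, -, rfl⟩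
    exact Real.rpow_nonneg (integral_nonneg fun p => Real.rpow_nonneg (nrmB_nonneg B _) r) _

theorem drB_map_le [MeasurableSpace E] [OpensMeasurableSpace E] [SecondCountableTopology E]
    (B : E →L[ℝ] E) (r : ℝ) (P : Measure Ω) [IsProbabilityMeasure P] {X Y : Ω → E}
    (hX : Measurable X) (hY : Measurable Y) :
    drB B r (P.map X) (P.map Y) ≤ (∫ ω, nrmB B (X ω - Y ω) ^ r ∂P) ^ (1 / r) := by
  have hXY : Measurable fun ω => (X ω, Y ω) := hX.prodMk hY
  refine csInf_le ⟨0, ?_⟩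
    ⟨P.map fun ω => (X ω, Y ω), Measure.isProbabilityMeasure_map hXY.aemeasurable, ?_, ?_, ?_⟩
  · rintro c ⟨γ, -, -, -, rfl⟩
    exact Real.rpow_nonneg (integral_nonneg fun p => Real.rpow_nonneg (nrmB_nonneg B _) r) _
  · rw [Measure.map_map measurable_fst hXY]; rfl
  · rw [Measure.map_map measurable_snd hXY]; rfl
  · rw [integral_map hXY.aemeasurable]
    exact ((continuous_nrmB B).comp (continuous_fst.sub continuous_snd)).measurable.pow_const r
      |>.aestronglyMeasurable

theorem integral_rpow_le_integral_sq_rpow {P : Measure Ω} [IsProbabilityMeasure P]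
    {g : Ω → ℝ} (hg0 : 0 ≤ g) (hg : MemLp g 2 P) {r : ℝ} (hr0 : 0 < r) (hr2 : r ≤ 2) :
    ∫ ω, g ω ^ r ∂P ≤ (∫ ω, g ω ^ 2 ∂P) ^ (r / 2) := by
  have hpow : ∀ ω, g ω ^ r = (g ω ^ 2) ^ (r / 2) := fun ω => by
    rw [← Real.rpow_natCast, ← Real.rpow_mul (hg0 ω)]
    ring_nf
  have hgr : Integrable (fun ω => g ω ^ r) P := by
    have := (hg.mono_exponent (p := ENNReal.ofReal r) (by simpa using hr2)).integrable_norm_rpow'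
    simpa [ENNReal.toReal_ofReal hr0.le, Real.norm_of_nonneg (hg0 _)] using this
  simp only [hpow] at hgr ⊢
  exact (Real.concaveOn_rpow (by positivity) (by linarith)).le_map_integral
    (Real.continuous_rpow_const (by positivity)).continuousOn isClosed_Ici
    (ae_of_all _ fun ω => sq_nonneg (g ω)) hg.integrable_sq hgr

theorem drB_map_sq_le_integral [MeasurableSpace E] [OpensMeasurableSpace E]
    [SecondCountableTopology E] (B : E →L[ℝ] E) {r : ℝ} (hr0 : 0 < r) (hr2 : r ≤ 2)
    (P : Measure Ω) [IsProbabilityMeasure P] {X Y : Ω → E}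
    (hX : Measurable X) (hY : Measurable Y) (hXY : MemLp (fun ω => nrmB B (X ω - Y ω)) 2 P) :
    drB B r (P.map X) (P.map Y) ^ 2 ≤ ∫ ω, nrmB B (X ω - Y ω) ^ 2 ∂P := by
  set S := ∫ ω, nrmB B (X ω - Y ω) ^ 2 ∂P
  have hS : 0 ≤ S := integral_nonneg fun ω => sq_nonneg _
  have hd : drB B r (P.map X) (P.map Y) ≤ √S :=
    calc drB B r (P.map X) (P.map Y) ≤ (∫ ω, nrmB B (X ω - Y ω) ^ r ∂P) ^ (1 / r) :=
          drB_map_le B r P hX hY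
      _ ≤ (S ^ (r / 2)) ^ (1 / r) :=
          Real.rpow_le_rpow (integral_nonneg fun ω => Real.rpow_nonneg (nrmB_nonneg B _) r)
            (integral_rpow_le_integral_sq_rpow (fun ω => nrmB_nonneg B _) hXY hr0 hr2)
            (by positivity)
      _ = √S := by
          rw [← Real.rpow_mul hS, Real.sqrt_eq_rpow]
          congr 1
          field_simp
  calc drB B r (P.map X) (P.map Y) ^ 2 ≤ √S ^ 2 := pow_le_pow_left₀ (drB_nonneg B r _ _) hd 2
    _ = S := Real.sq_sqrt hS

theorem integral_le_two_mul_of_ae_le {P : Measure Ω} [IsProbabilityMeasure P]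
    {F G : Ω → ℝ} {C d : ℝ} (hC : 0 ≤ C) (hG : Integrable G P) (hd0 : 0 ≤ d)
    (hd : d ≤ ∫ ω, G ω ∂P) (hF : ∀ᵐ ω ∂P, F ω ≤ C * (G ω + d)) :
    ∫ ω, F ω ∂P ≤ 2 * C * ∫ ω, G ω ∂P := by
  by_cases hFi : Integrable F P
  · calc ∫ ω, F ω ∂P ≤ ∫ ω, C * (G ω + d) ∂P :=
          integral_mono_ae hFi ((hG.add (integrable_const d)).const_mul C) hF
      _ = C * (∫ ω, G ω ∂P + d) := by
          rw [integral_const_mul, integral_add hG (integrable_const d), integral_const,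
            probReal_univ, one_smul]
      _ ≤ 2 * C * ∫ ω, G ω ∂P := by nlinarith
  · rw [integral_undef hFi]
    exact mul_nonneg (by positivity) (hd0.trans hd)

end

theorem statement12_general
    (r : ℝ) (hr1 : 1 ≤ r) (hr2 : r < 2)
    (B : H →L[ℝ] H)
    (f₁ : H → Measure H → H) (f₂ : H → Measure H → Λ → H)
    (Λt : Set Λ)
    -- the one-sided estimate in the weak norm
    (Cw : ℝ) (hCw : 0 ≤ Cw)
    (hfB : ∀ (x y : H) (μ β : Measure H) (q : Λ), IsP2 μ → IsP2 β → q ∈ Λt →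
      ⟪(f₁ x μ + f₂ x μ q) - (f₁ y β + f₂ y β q), B (x - y)⟫
        ≤ Cw * (nrmB B (x - y) ^ 2 + drB B r μ β ^ 2)) :
    ∃ C' : ℝ, 0 ≤ C' ∧
      ∀ (X Y : ℝ → H) (Q : ℝ → Λ), Measurable X → Measurable Y → Measurable Q →
        (∫⁻ ω in Set.Ioo (0:ℝ) 1, (‖X ω‖₊ : ℝ≥0∞) ^ 2) < ⊤ →
        (∫⁻ ω in Set.Ioo (0:ℝ) 1, (‖Y ω‖₊ : ℝ≥0∞) ^ 2) < ⊤ →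
        (∀ᵐ ω ∂(volume.restrict (Set.Ioo (0:ℝ) 1)), Q ω ∈ Λt) →
        (∫⁻ ω in Set.Ioo (0:ℝ) 1, (‖Q ω‖₊ : ℝ≥0∞) ^ 2) < ⊤ →
        (∫ ω in Set.Ioo (0:ℝ) 1,
            ⟪(f₁ (X ω) (Measure.map X (volume.restrict (Set.Ioo (0:ℝ) 1))) +
                  f₂ (X ω) (Measure.map X (volume.restrict (Set.Ioo (0:ℝ) 1))) (Q ω)) -
                (f₁ (Y ω) (Measure.map Y (volume.restrict (Set.Ioo (0:ℝ) 1))) +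
                  f₂ (Y ω) (Measure.map Y (volume.restrict (Set.Ioo (0:ℝ) 1))) (Q ω)),
              B (X ω - Y ω)⟫)
          ≤ C' * ∫ ω in Set.Ioo (0:ℝ) 1, nrmB B (X ω - Y ω) ^ 2 := by
  refine ⟨2 * Cw, by positivity, fun X Y Q hX hY _ hX2 hY2 hQ _ => ?_⟩
  set P : Measure ℝ := volume.restrict (Set.Ioo (0:ℝ) 1)
  have : IsProbabilityMeasure P := ⟨by simp [P, Real.volume_Ioo]⟩
  have hXY : MemLp (fun ω => nrmB B (X ω - Y ω)) 2 P :=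
    memLp_nrmB_sub B (memLp_two_of_lintegral_sq_lt_top hX.aestronglyMeasurable hX2)
      (memLp_two_of_lintegral_sq_lt_top hY.aestronglyMeasurable hY2)
  refine integral_le_two_mul_of_ae_le hCw hXY.integrable_sq (sq_nonneg _)
    (drB_map_sq_le_integral B (by linarith) hr2.le P hX hY hXY) ?_
  filter_upwards [hQ] with ω hω
  exact hfB _ _ _ _ _ (isP2_map hX hX2) (isP2_map hY hY2) hω

/-- Under (Af), Borel measurability of `f` on `H × Λ̃`, and the one-sided
estimate `⟨f(x,μ,q) − f(y,β,q), B(x−y)⟩ ≤ C(|x−y|²_{−1} + d_{−1,r}(μ,β)²)`, the lifted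
drift satisfies the one-sided estimate
`∫₀¹ ⟨f(X(ω),X_#𝓛¹,Q(ω)) − f(Y(ω),Y_#𝓛¹,Q(ω)), B(X(ω)−Y(ω))⟩ dω ≤ C' ∫₀¹ |X(ω)−Y(ω)|²_{−1} dω`. -/
theorem statement12
    (r : ℝ) (hr1 : 1 ≤ r) (hr2 : r < 2)
    (B : H →L[ℝ] H)
    (hBsa : ∀ x y : H, ⟪B x, y⟫ = ⟪x, B y⟫)
    (hBpos : ∀ x : H, x ≠ 0 → 0 < ⟪B x, x⟫)
    (f₁ : H → Measure H → H) (f₂ : H → Measure H → Λ → H)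
    (Λt : Set Λ) (hΛne : Λt.Nonempty) (hΛconv : Convex ℝ Λt)
    -- Assumption (Af)
    (Cf : ℝ) (hCf : 0 ≤ Cf)
    (hf_lip : ∀ (x y : H) (μ β : Measure H) (q : Λ), IsP2 μ → IsP2 β → q ∈ Λt →
      ‖f₁ x μ - f₁ y β‖ + ‖f₂ x μ q - f₂ y β q‖ ≤ Cf * (‖x - y‖ + dr r μ β))
    (hf₂bd : ∀ (x : H) (μ : Measure H) (q : Λ), IsP2 μ → q ∈ Λt →
      ‖f₂ x μ q‖ ≤ Cf * (1 + ‖q‖))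
    -- Borel measurability of `f` on `H × Λ̃`
    (hfm : ∀ μ : Measure H,
      Measurable (fun z : H × Λt => f₁ z.1 μ + f₂ z.1 μ (z.2 : Λ)))
    -- the one-sided estimate in the weak norm
    (Cw : ℝ) (hCw : 0 ≤ Cw)
    (hfB : ∀ (x y : H) (μ β : Measure H) (q : Λ), IsP2 μ → IsP2 β → q ∈ Λt →
      ⟪(f₁ x μ + f₂ x μ q) - (f₁ y β + f₂ y β q), B (x - y)⟫
        ≤ Cw * (nrmB B (x - y) ^ 2 + drB B r μ β ^ 2)) :
    ∃ C' : ℝ, 0 ≤ C' ∧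
      ∀ (X Y : ℝ → H) (Q : ℝ → Λ), Measurable X → Measurable Y → Measurable Q →
        (∫⁻ ω in Set.Ioo (0:ℝ) 1, (‖X ω‖₊ : ℝ≥0∞) ^ 2) < ⊤ →
        (∫⁻ ω in Set.Ioo (0:ℝ) 1, (‖Y ω‖₊ : ℝ≥0∞) ^ 2) < ⊤ →
        (∀ᵐ ω ∂(volume.restrict (Set.Ioo (0:ℝ) 1)), Q ω ∈ Λt) →
        (∫⁻ ω in Set.Ioo (0:ℝ) 1, (‖Q ω‖₊ : ℝ≥0∞) ^ 2) < ⊤ →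
        (∫ ω in Set.Ioo (0:ℝ) 1,
            ⟪(f₁ (X ω) (Measure.map X (volume.restrict (Set.Ioo (0:ℝ) 1))) +
                  f₂ (X ω) (Measure.map X (volume.restrict (Set.Ioo (0:ℝ) 1))) (Q ω)) -
                (f₁ (Y ω) (Measure.map Y (volume.restrict (Set.Ioo (0:ℝ) 1))) +
                  f₂ (Y ω) (Measure.map Y (volume.restrict (Set.Ioo (0:ℝ) 1))) (Q ω)),
              B (X ω - Y ω)⟫)
          ≤ C' * ∫ ω in Set.Ioo (0:ℝ) 1, nrmB B (X ω - Y ω) ^ 2 :=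
  statement12_general r hr1 hr2 B f₁ f₂ Λt Cw hCw hfB

end
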